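/- Let n ≥ 4 and L > 2n be integers, let x ∈ Λ_L, let 0 ≤ i, j ≤ 3, and let z ∈ Q^{i,j}_x. Then the set (Q_x \ {x + w_i}) ∪ {z} has n² elements and exactly 2n(n−1) − 1 unordered adjacent pairs; that is, every configuration of the set ℰ^{i,j}_x (a square with one corner particle removed and re-attached to the j-th side) has energy −2n(n−1) + 1. -/

import Mathlib

open scoped Classical

noncomputable section

/-- A site of the discrete torus `Λ_L`. -/
abbrev Site (L : ℕ) := ZMod L × ZMod L

/-- Two sites of the discrete torus are adjacent if their difference is a unit vector. -/
def torusAdj (L : ℕ) (u v : Site L) : Prop :=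
  u - v = (1, 0) ∨ u - v = (-1, 0) ∨ u - v = (0, 1) ∨ u - v = (0, -1)

/-- `e(S)`: the number of unordered pairs of adjacent sites contained in `S`. -/
def torusE (L : ℕ) (S : Finset (Site L)) : ℕ :=
  ((S ×ˢ S).filter fun p => torusAdj L p.1 p.2).card / 2

/-- The occupied set `Q_x = x + {0,…,n−1}²` of the square configuration `η^x`. -/
def squareSet (L n : ℕ) (x : Site L) : Finset (Site L) :=
  (Finset.range n ×ˢ Finset.range n).image fun p => x + ((p.1 : ZMod L), (p.2 : ZMod L))

/-- The corners `w₀ = (0,0)`, `w₁ = (n−1,0)`, `w₂ = (n−1,n−1)`, `w₃ = (0,n−1)`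
of the square `Q`, with coordinates reduced mod `L`. -/
def corner (L n : ℕ) : Fin 4 → Site L :=
  ![(0, 0), (((n - 1 : ℕ) : ZMod L), 0),
    (((n - 1 : ℕ) : ZMod L), ((n - 1 : ℕ) : ZMod L)), (0, ((n - 1 : ℕ) : ZMod L))]

/-- The outer boundary `∂₊B` of `B`: the sites not in `B` at distance one from `B`. -/
def outerBoundary (L : ℕ) (B : Finset (Site L)) : Finset (Site L) :=
  (B.biUnion fun y =>
    ({y + (1, 0), y + (-1, 0), y + (0, 1), y + (0, -1)} : Finset (Site L))) \ B

/-- The direction `(1−j)e₂` for `j ∈ {0,2}` and `(j−2)e₁` for `j ∈ {1,3}` entering the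
definition of the `j`-th boundary. -/
def sideDir (L : ℕ) : Fin 4 → Site L :=
  ![(0, 1), (-1, 0), (0, -1), (1, 0)]

/-- The `j`-th boundary `∂_j B`: sites `z` of the outer boundary of `B` such that
`y − z = (1−j)e₂` (for `j = 0,2`), resp. `y − z = (j−2)e₁` (for `j = 1,3`),
for some `y ∈ B`. -/
def sideBoundary (L : ℕ) (j : Fin 4) (B : Finset (Site L)) : Finset (Site L) :=
  (outerBoundary L B).filter fun z => ∃ y ∈ B, y - z = sideDir L j

/-!
Adding a site `v ∉ S` raises `e(S)` by the number of neighbours of `v` in `S`: the bonds of the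
torus split into horizontal and vertical ones, counted by `bondCount (1, 0)` and
`bondCount (0, 1)`. The square `Q_x` is a product of two arcs of length `n`, so it has `2n(n-1)`
bonds. Since `L > n + 1`, integer coordinates relative to `x` identify a neighbourhood of `Q_x`
with a piece of `ℤ²`; there a corner of the square has two neighbours in it, and a site outside it
but adjacent to it has exactly one. Removing the corner and attaching `z` therefore leaves
`2n(n-1) - 2 + 1` bonds.
-/

open Finset

section Bonds

variable {G : Type*} [AddCommGroup G] [DecidableEq G]

def bondCount (d : G) (S : Finset G) : ℕ := #{u ∈ S | u + d ∈ S}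

theorem card_filter_sub_eq_bondCount (d : G) (S : Finset G) :
    #{p ∈ S ×ˢ S | p.1 - p.2 = d} = bondCount d S := by
  refine card_nbij' Prod.snd (fun u => (u + d, u)) ?_ (fun _ _ => by simp_all) ?_
    (fun _ _ => rfl)
  all_goals
    rintro ⟨a, b⟩ h
    obtain ⟨⟨ha, hb⟩, rfl⟩ := by simpa using h
    simp [ha, hb]

theorem bondCount_neg (d : G) (S : Finset G) : bondCount (-d) S = bondCount d S :=
  card_nbij' (· + -d) (· + d) (fun _ _ => by simp_all) (fun _ _ => by simp_all)
    (fun _ _ => by simp) (fun _ _ => by simp)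

theorem bondCount_insert {d v : G} {S : Finset G} (hv : v ∉ S) (hd : d ≠ 0) :
    bondCount d (insert v S) =
      bondCount d S + ((if v + d ∈ S then 1 else 0) + (if v - d ∈ S then 1 else 0)) := by
  have hvd : v + d ∈ insert v S ↔ v + d ∈ S := by simp [hd]
  have hS : ∀ u ∈ S, (if u + d ∈ insert v S then 1 else 0) =
      (if u + d ∈ S then 1 else 0) + (if v - d = u then 1 else 0) := by
    intro u _
    by_cases h : v - d = u
    · subst h
      simp [hv]
    · have : u + d ≠ v := fun h' => h (by rw [← h']; abel)
      simp [this, h]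
  simp only [bondCount, card_filter, sum_insert hv, hvd, sum_congr rfl hS, sum_add_distrib,
    sum_ite_eq]
  omega

theorem bondCount_zero (S : Finset G) : bondCount 0 S = #S := by
  simp [bondCount]

theorem bondCount_product {H : Type*} [AddCommGroup H] [DecidableEq H] (d : G) (e : H)
    (A : Finset G) (B : Finset H) :
    bondCount (d, e) (A ×ˢ B) = bondCount d A * bondCount e B := by
  simp only [bondCount, mem_product, Prod.fst_add, Prod.snd_add, ← card_product]
  rw [← filter_product]

end Bonds

theorem ZMod.intCast_eq_intCast_iff_of_abs_sub_lt {L : ℕ} {a b : ℤ} (h : |a - b| < L) :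
    (a : ZMod L) = b ↔ a = b := by
  rw [ZMod.intCast_eq_intCast_iff_dvd_sub]
  refine ⟨fun hd => ?_, fun h => by simp [h]⟩
  have := Int.eq_zero_of_abs_lt_dvd hd (by rwa [abs_sub_comm])
  omega

section Torus

variable {L : ℕ}

theorem torusE_eq_bondCount (hL : 2 < L) (S : Finset (Site L)) :
    torusE L S = bondCount (1, 0) S + bondCount (0, 1) S := by
  have : Fact (1 < L) := ⟨by omega⟩
  have : Fact (2 < L) := ⟨hL⟩
  let D : Finset (Site L) := {(1, 0), (-1, 0), (0, 1), (0, -1)}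
  have hD : Set.MapsTo (fun p : Site L × Site L => p.1 - p.2)
      ↑((S ×ˢ S).filter fun p => torusAdj L p.1 p.2) ↑D := by
    intro p hp
    simpa [D, torusAdj] using (mem_filter.mp hp).2
  have hfiber : ∀ d ∈ D, #{p ∈ (S ×ˢ S).filter (fun p => torusAdj L p.1 p.2) | p.1 - p.2 = d}
      = bondCount d S := by
    intro d hd
    rw [filter_filter, ← card_filter_sub_eq_bondCount]
    congr 1
    refine filter_congr fun p _ => ?_
    simp only [D, mem_insert, mem_singleton] at hd
    simp only [torusAdj, and_iff_right_iff_imp]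
    rintro rfl
    tauto
  have hneg1 : bondCount ((-1, 0) : Site L) S = bondCount (1, 0) S := by
    simpa using bondCount_neg ((1, 0) : Site L) S
  have hneg2 : bondCount ((0, -1) : Site L) S = bondCount (0, 1) S := by
    simpa using bondCount_neg ((0, 1) : Site L) S
  rw [torusE, card_eq_sum_card_fiberwise hD, sum_congr rfl hfiber]
  have h1 : (1 : ZMod L) ≠ -1 := ZMod.neg_one_ne_one.symm
  rw [sum_insert (by simpa using h1), sum_insert (by simp), sum_pair (by simpa using h1),
    hneg1, hneg2]
  omega

def nbrCount (S : Finset (Site L)) (v : Site L) : ℕ :=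
  [v + (1, 0), v + (-1, 0), v + (0, 1), v + (0, -1)].countP (· ∈ S)

theorem torusE_insert (hL : 2 < L) {S : Finset (Site L)} {v : Site L} (hv : v ∉ S) :
    torusE L (insert v S) = torusE L S + nbrCount S v := by
  have : Fact (1 < L) := ⟨by omega⟩
  rw [torusE_eq_bondCount hL, torusE_eq_bondCount hL, bondCount_insert hv (by simp),
    bondCount_insert hv (by simp)]
  simp only [nbrCount, List.countP_cons, List.countP_nil, sub_eq_add_neg, Prod.neg_mk, neg_zero,
    decide_eq_true_eq]
  ring

theorem nbrCount_erase_self (hL : 1 < L) (S : Finset (Site L)) (v : Site L) :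
    nbrCount (S.erase v) v = nbrCount S v := by
  have : Fact (1 < L) := ⟨hL⟩
  simp [nbrCount, List.countP_cons]

theorem nbrCount_mono {S T : Finset (Site L)} (h : S ⊆ T) (v : Site L) :
    nbrCount S v ≤ nbrCount T v :=
  List.countP_mono_left fun _ _ hu => by simpa using h (by simpa using hu)

theorem one_le_nbrCount {S : Finset (Site L)} {v y : Site L} (hy : y ∈ S) (h : torusAdj L y v) :
    1 ≤ nbrCount S v := by
  refine List.countP_pos_iff.mpr ⟨y, ?_, by simpa using hy⟩
  rcases h with h | h | h | h <;> simp [← h]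

def arc (a : ZMod L) (n : ℕ) : Finset (ZMod L) := (range n).image fun k : ℕ => a + (k : ZMod L)

theorem injOn_arc {n : ℕ} (h : n ≤ L) (a : ZMod L) :
    Set.InjOn (fun k : ℕ => a + (k : ZMod L)) (range n) := by
  intro k hk m hm hkm
  simp only [coe_range, Set.mem_Iio, add_right_inj] at hk hm hkm
  rw [← Int.cast_natCast, ← Int.cast_natCast (R := ZMod L) m,
    ZMod.intCast_eq_intCast_iff_of_abs_sub_lt (abs_sub_lt_iff.mpr ⟨by omega, by omega⟩)] at hkm
  exact_mod_cast hkm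

theorem card_arc {n : ℕ} (h : n ≤ L) (a : ZMod L) : #(arc a n) = n := by
  rw [arc, card_image_of_injOn (injOn_arc h a), card_range]

theorem add_intCast_mem_arc_iff {n : ℕ} {a : ZMod L} {k : ℤ} (h₁ : n - L ≤ k) (h₂ : k < L) :
    a + k ∈ arc a n ↔ 0 ≤ k ∧ k < n := by
  simp only [arc, mem_image, mem_range, add_right_inj]
  constructor
  · rintro ⟨m, hm, hmk⟩
    rw [← Int.cast_natCast,
      ZMod.intCast_eq_intCast_iff_of_abs_sub_lt (abs_sub_lt_iff.mpr ⟨by omega, by omega⟩)] at hmk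
    omega
  · rintro ⟨hk₀, hkn⟩
    exact ⟨k.toNat, by omega, by rw [← Int.cast_natCast, Int.toNat_of_nonneg hk₀]⟩

theorem bondCount_one_arc {n : ℕ} (h : n < L) (a : ZMod L) : bondCount 1 (arc a n) = n - 1 := by
  have hstep : ∀ k < n, a + (k : ZMod L) + 1 ∈ arc a n ↔ k + 1 < n := fun k hk => by
    have := add_intCast_mem_arc_iff (n := n) (a := a) (k := k + 1) (by omega) (by omega)
    push_cast at this
    rw [add_assoc, this]
    omega
  have hfilter :
      (range n).filter (fun k : ℕ => a + (k : ZMod L) + 1 ∈ arc a n) = range (n - 1) := by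
    ext k
    rw [mem_filter, mem_range, mem_range]
    constructor
    · rintro ⟨hk, hk₁⟩
      have := (hstep k hk).mp hk₁
      omega
    · intro hk
      exact ⟨by omega, (hstep k (by omega)).mpr (by omega)⟩
  rw [bondCount, arc, filter_image, ← arc, hfilter,
    card_image_of_injOn ((injOn_arc h.le a).mono (by simp)), card_range]

theorem squareSet_eq_arc_product (n : ℕ) (x : Site L) :
    squareSet L n x = arc x.1 n ×ˢ arc x.2 n := by
  rw [squareSet, arc, arc, ← prodMap_image_product]
  rfl

theorem card_squareSet {n : ℕ} (h : n ≤ L) (x : Site L) : #(squareSet L n x) = n ^ 2 := by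
  rw [squareSet_eq_arc_product, card_product, card_arc h, card_arc h, sq]

theorem torusE_squareSet {n : ℕ} (hL : 2 < L) (hn : n < L) (x : Site L) :
    torusE L (squareSet L n x) = 2 * n * (n - 1) := by
  rw [torusE_eq_bondCount hL, squareSet_eq_arc_product, bondCount_product, bondCount_product,
    bondCount_zero, bondCount_zero, bondCount_one_arc hn, bondCount_one_arc hn, card_arc hn.le,
    card_arc hn.le]
  ring

def chart (x : Site L) (p : ℤ × ℤ) : Site L := x + ((p.1 : ZMod L), (p.2 : ZMod L))

theorem chart_add_unit (x : Site L) (a b : ℤ) :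
    chart x (a, b) + (1, 0) = chart x (a + 1, b) ∧
    chart x (a, b) + (-1, 0) = chart x (a - 1, b) ∧
    chart x (a, b) + (0, 1) = chart x (a, b + 1) ∧
    chart x (a, b) + (0, -1) = chart x (a, b - 1) := by
  refine ⟨?_, ?_, ?_, ?_⟩ <;> ext <;> simp [chart] <;> ring

theorem chart_mem_squareSet_iff {n : ℕ} (x : Site L) {a b : ℤ} (ha₁ : n - L ≤ a) (ha₂ : a < L)
    (hb₁ : n - L ≤ b) (hb₂ : b < L) :
    chart x (a, b) ∈ squareSet L n x ↔ 0 ≤ a ∧ a < n ∧ 0 ≤ b ∧ b < n := by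
  rw [squareSet_eq_arc_product, mem_product, chart, Prod.fst_add, Prod.snd_add,
    add_intCast_mem_arc_iff ha₁ ha₂, add_intCast_mem_arc_iff hb₁ hb₂, and_assoc]

theorem exists_chart_eq_of_mem_squareSet {n : ℕ} {x y : Site L} (hy : y ∈ squareSet L n x) :
    ∃ a b : ℤ, 0 ≤ a ∧ a < n ∧ 0 ≤ b ∧ b < n ∧ chart x (a, b) = y := by
  obtain ⟨⟨a, b⟩, hab, rfl⟩ := mem_image.mp hy
  rw [mem_product, mem_range, mem_range] at hab
  exact ⟨a, b, by omega, by omega, by omega, by omega, by simp [chart]⟩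

theorem nbrCount_squareSet_corner {n : ℕ} (hn : 2 ≤ n) (hL : n < L) (x : Site L) {a b : ℤ}
    (ha : a = 0 ∨ a = n - 1) (hb : b = 0 ∨ b = n - 1) :
    nbrCount (squareSet L n x) (chart x (a, b)) = 2 := by
  simp (disch := omega) only [nbrCount, chart_add_unit, List.countP_cons, List.countP_nil,
    chart_mem_squareSet_iff, decide_eq_true_eq]
  split_ifs <;> omega

theorem nbrCount_squareSet_of_adj {n : ℕ} (hL : n + 2 ≤ L) {x y z : Site L}
    (hy : y ∈ squareSet L n x) (hz : z ∉ squareSet L n x) (hyz : torusAdj L y z) :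
    nbrCount (squareSet L n x) z = 1 := by
  obtain ⟨a, b, ha₀, ha, hb₀, hb, rfl⟩ := exists_chart_eq_of_mem_squareSet hy
  rw [← sub_sub_self (chart x (a, b)) z] at hz ⊢
  rcases hyz with h | h | h | h <;>
  · simp only [h, sub_eq_add_neg, Prod.neg_mk, neg_neg, neg_zero, chart_add_unit] at hz ⊢
    rw [chart_mem_squareSet_iff x (by omega) (by omega) (by omega) (by omega)] at hz
    simp (disch := omega) only [nbrCount, chart_add_unit, List.countP_cons, List.countP_nil,
      chart_mem_squareSet_iff, decide_eq_true_eq]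
    split_ifs <;> omega

theorem exists_chart_eq_corner {n : ℕ} (hn : 1 ≤ n) (x : Site L) (i : Fin 4) :
    ∃ a b : ℤ, (a = 0 ∨ a = n - 1) ∧ (b = 0 ∨ b = n - 1) ∧ x + corner L n i = chart x (a, b) := by
  fin_cases i
  · exact ⟨0, 0, by simp, by simp, by simp [corner, chart]⟩
  · exact ⟨n - 1, 0, by simp, by simp, by simp [corner, chart, Nat.cast_sub hn]⟩
  · exact ⟨n - 1, n - 1, by simp, by simp, by simp [corner, chart, Nat.cast_sub hn]⟩
  · exact ⟨0, n - 1, by simp, by simp, by simp [corner, chart, Nat.cast_sub hn]⟩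

theorem torusAdj_of_sub_eq_sideDir {y z : Site L} {j : Fin 4} (h : y - z = sideDir L j) :
    torusAdj L y z := by
  rw [torusAdj, h]
  fin_cases j <;> simp [sideDir]

end Torus

/-- every configuration of `ℰ^{i,j}_x` — a square with the corner
particle `x + w_i` removed and re-attached at a site `z ∈ Q^{i,j}_x` of the `j`-th
side — has `n²` particles and exactly `2n(n−1) − 1` adjacent occupied pairs,
i.e. energy `−2n(n−1) + 1`. -/
theorem corner_moved_energy (n L : ℕ) (hn : 4 ≤ n) (hL : 2 * n < L) (x : Site L)
    (i j : Fin 4) (z : Site L)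
    (hz : z ∈ sideBoundary L j ((squareSet L n x).erase (x + corner L n i)) \
            squareSet L n x) :
    (insert z ((squareSet L n x).erase (x + corner L n i))).card = n ^ 2
    ∧ torusE L (insert z ((squareSet L n x).erase (x + corner L n i)))
        = 2 * n * (n - 1) - 1 := by
  obtain ⟨a, b, ha, hb, hca⟩ := exists_chart_eq_corner (n := n) (by omega) x i
  set Q := squareSet L n x
  set c := x + corner L n i
  obtain ⟨hzS, hzQ⟩ := mem_sdiff.mp hz
  obtain ⟨-, y, hyB, hyz⟩ := mem_filter.mp hzS
  have hcQ : c ∈ Q := by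
    rw [hca, chart_mem_squareSet_iff x (by omega) (by omega) (by omega) (by omega)]
    omega
  have hzB : z ∉ Q.erase c := fun h => hzQ (mem_of_mem_erase h)
  have hc_deg : nbrCount (Q.erase c) c = 2 := by
    rw [nbrCount_erase_self (by omega), hca,
      nbrCount_squareSet_corner (by omega) (by omega) x ha hb]
  have hz_deg : nbrCount (Q.erase c) z = 1 :=
    le_antisymm
      ((nbrCount_mono (erase_subset c Q) z).trans_eq
        (nbrCount_squareSet_of_adj (by omega) (mem_of_mem_erase hyB) hzQ
          (torusAdj_of_sub_eq_sideDir hyz)))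
      (one_le_nbrCount hyB (torusAdj_of_sub_eq_sideDir hyz))
  have hQ := torusE_insert (by omega) (notMem_erase c Q)
  rw [insert_erase hcQ, torusE_squareSet (by omega) (by omega), hc_deg] at hQ
  refine ⟨?_, ?_⟩
  · rw [card_insert_of_notMem hzB, card_erase_of_mem hcQ, card_squareSet (by omega)]
    have := Nat.one_le_pow 2 n (by omega)
    omega
  · rw [torusE_insert (by omega) hzB, hz_deg]
    omega
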